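/- arXiv:2106.11146 — 2 statements merged into one kernel-verified Lean document; each statement's English description precedes it below -/
import Mathlib

section
/- Let C be a binary self-dual code with automorphism σ of type pr-(t₁; 0), p, r odd primes. If u ∈ F_σ(C) (the fixed subcode) and v ∈ E_σ(C) (the subcode of codewords with even weight on each cycle of σ), then both ⟨u,v⟩ ≡ 0 and ⟨v,u⟩ ≡ 0 modulo x^{pr}−1, where ⟨u,v⟩ = Σᵢ uᵢ(x)vᵢ(x⁻¹). -/
open Polynomial AdjoinRoot

abbrev Rq (N : ℕ) : Type := AdjoinRoot (X ^ N - 1 : Polynomial (ZMod 2))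

noncomputable def cyclePoly {t N : ℕ} (v : Fin t × Fin N → ZMod 2) (i : Fin t) : Rq N :=
  ∑ j : Fin N, algebraMap (ZMod 2) (Rq N) (v (i, j)) *
    (root (X ^ N - 1 : Polynomial (ZMod 2))) ^ (j : ℕ)

noncomputable def cyclePolyInv {t N : ℕ} (v : Fin t × Fin N → ZMod 2) (i : Fin t) : Rq N :=
  ∑ j : Fin N, algebraMap (ZMod 2) (Rq N) (v (i, j)) *
    ((root (X ^ N - 1 : Polynomial (ZMod 2))) ^ (N - 1)) ^ (j : ℕ)

noncomputable def polyInner {t N : ℕ} (u v : Fin t × Fin N → ZMod 2) : Rq N :=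
  ∑ i : Fin t, cyclePoly u i * cyclePolyInv v i

def IsSelfDual {ι : Type*} [Fintype ι] (C : Submodule (ZMod 2) (ι → ZMod 2)) : Prop :=
  ∀ v, v ∈ C ↔ ∀ u ∈ C, ∑ k, u k * v k = 0

def cycShift {t N : ℕ} [NeZero N] (v : Fin t × Fin N → ZMod 2) :
    Fin t × Fin N → ZMod 2 :=
  fun q => v (q.1, q.2 - 1)

/-!
A σ-fixed vector is constant on every cycle, so on each cycle its polynomial is a scalar
multiple of the all-one polynomial `1 + x + ⋯ + x^(N-1)`, which is fixed under multiplication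
by `x` and hence by `x⁻¹`. Multiplying it by `∑ⱼ aⱼ yʲ` with `y` a power of `x` therefore gives
`(∑ⱼ aⱼ)(1 + x + ⋯ + x^(N-1))`, which vanishes when `a` has even weight.
-/

section GeomSum

variable {R : Type*} [CommRing R]

theorem fin_geom_sum_mul_of_pow_eq_one {z : R} {N : ℕ} (hz : z ^ N = 1) :
    (∑ j : Fin N, z ^ (j : ℕ)) * z = ∑ j : Fin N, z ^ (j : ℕ) := by
  have h := geom_sum_mul z N
  rw [hz, sub_self, ← Fin.sum_univ_eq_sum_range] at h
  linear_combination h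

theorem mul_pow_eq_self_of_mul_eq_self {S z : R} (h : S * z = S) (k : ℕ) : S * z ^ k = S := by
  induction k with
  | zero => rw [pow_zero, mul_one]
  | succ k ih => rw [pow_succ, ← mul_assoc, ih, h]

theorem mul_sum_mul_pow_of_mul_eq_self {ι : Type*} {S w : R} (h : S * w = S) (s : Finset ι)
    (a : ι → R) (e : ι → ℕ) : S * ∑ j ∈ s, a j * w ^ e j = S * ∑ j ∈ s, a j := by
  simp only [Finset.mul_sum, mul_left_comm S, mul_pow_eq_self_of_mul_eq_self h, mul_comm]

end GeomSum

section CyclePoly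

variable {t N : ℕ}

local notation "x" => root (X ^ N - 1 : Polynomial (ZMod 2))

local notation "allOnes" z => ∑ j : Fin N, z ^ (j : ℕ)

theorem root_X_pow_sub_one_pow : x ^ N = 1 := by
  have h := mk_self (f := (X ^ N - 1 : Polynomial (ZMod 2)))
  rwa [map_sub, map_pow, map_one, mk_X, sub_eq_zero] at h

theorem allOnes_mul_root : (allOnes x) * x = allOnes x :=
  fin_geom_sum_mul_of_pow_eq_one root_X_pow_sub_one_pow

theorem allOnes_inv_mul_root [NeZero N] :
    (allOnes (x ^ (N - 1))) * x = allOnes (x ^ (N - 1)) := by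
  have hinv : x ^ (N - 1) * x = 1 := by
    rw [← pow_succ, Nat.sub_add_cancel NeZero.one_le, root_X_pow_sub_one_pow]
  have hfix := fin_geom_sum_mul_of_pow_eq_one (z := x ^ (N - 1)) (N := N)
    (by rw [← pow_mul, mul_comm, pow_mul, root_X_pow_sub_one_pow, one_pow])
  rw [← hfix, mul_assoc, hinv, mul_one, hfix]

open Fin.NatCast Fin.CommRing in
theorem apply_eq_apply_zero_of_cycShift_eq_self [NeZero N] {u : Fin t × Fin N → ZMod 2}
    (hu : cycShift u = u) (i : Fin t) (j : Fin N) : u (i, j) = u (i, 0) := by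
  suffices h : ∀ k : ℕ, u (i, (k : Fin N)) = u (i, 0) by
    simpa only [Fin.cast_val_eq_self] using h j
  intro k
  induction k with
  | zero => rw [Nat.cast_zero]
  | succ k ih =>
    have hk := congrFun hu (i, ((k + 1 : ℕ) : Fin N))
    rw [cycShift, Nat.cast_succ, add_sub_cancel_right] at hk
    rw [Nat.cast_succ, ← hk, ih]

theorem cyclePoly_eq_of_cycShift_eq_self [NeZero N] {u : Fin t × Fin N → ZMod 2}
    (hu : cycShift u = u) (i : Fin t) :
    cyclePoly u i = algebraMap (ZMod 2) (Rq N) (u (i, 0)) * allOnes x := by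
  simp only [cyclePoly, apply_eq_apply_zero_of_cycShift_eq_self hu i, Finset.mul_sum]

theorem cyclePolyInv_eq_of_cycShift_eq_self [NeZero N] {u : Fin t × Fin N → ZMod 2}
    (hu : cycShift u = u) (i : Fin t) :
    cyclePolyInv u i = algebraMap (ZMod 2) (Rq N) (u (i, 0)) * allOnes (x ^ (N - 1)) := by
  simp only [cyclePolyInv, apply_eq_apply_zero_of_cycShift_eq_self hu i, Finset.mul_sum]

theorem allOnes_mul_cyclePolyInv {v : Fin t × Fin N → ZMod 2} {i : Fin t}
    (hv : ∑ j, v (i, j) = 0) : (allOnes x) * cyclePolyInv v i = 0 := by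
  rw [cyclePolyInv, mul_sum_mul_pow_of_mul_eq_self
    (mul_pow_eq_self_of_mul_eq_self allOnes_mul_root _), ← map_sum, hv, map_zero, mul_zero]

theorem allOnes_inv_mul_cyclePoly [NeZero N] {v : Fin t × Fin N → ZMod 2} {i : Fin t}
    (hv : ∑ j, v (i, j) = 0) : (allOnes (x ^ (N - 1))) * cyclePoly v i = 0 := by
  rw [cyclePoly, mul_sum_mul_pow_of_mul_eq_self allOnes_inv_mul_root, ← map_sum, hv,
    map_zero, mul_zero]

theorem polyInner_eq_zero_of_cycShift_eq_self_left [NeZero N] {u v : Fin t × Fin N → ZMod 2}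
    (hu : cycShift u = u) (hv : ∀ i, ∑ j, v (i, j) = 0) : polyInner u v = 0 :=
  Finset.sum_eq_zero fun i _ => by
    rw [cyclePoly_eq_of_cycShift_eq_self hu, mul_assoc, allOnes_mul_cyclePolyInv (hv i),
      mul_zero]

theorem polyInner_eq_zero_of_cycShift_eq_self_right [NeZero N] {u v : Fin t × Fin N → ZMod 2}
    (hu : cycShift u = u) (hv : ∀ i, ∑ j, v (i, j) = 0) : polyInner v u = 0 :=
  Finset.sum_eq_zero fun i _ => by
    rw [cyclePolyInv_eq_of_cycShift_eq_self hu, mul_left_comm,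
      mul_comm (cyclePoly v i), allOnes_inv_mul_cyclePoly (hv i), mul_zero]

end CyclePoly

theorem stmt2_general (p r t : ℕ)
    [NeZero (p * r)]
    (u : Fin t × Fin (p * r) → ZMod 2) (hufix : cycShift u = u)
    (v : Fin t × Fin (p * r) → ZMod 2)
    (hveven : ∀ i, ∑ j, v (i, j) = 0) :
    polyInner u v = 0 ∧ polyInner v u = 0 := by
  exact ⟨polyInner_eq_zero_of_cycShift_eq_self_left hufix hveven,
    polyInner_eq_zero_of_cycShift_eq_self_right hufix hveven⟩

theorem stmt2 (p r t : ℕ) (hp : p.Prime) (hr : r.Prime) (hpo : Odd p) (hro : Odd r)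
    [NeZero (p * r)]
    (C : Submodule (ZMod 2) (Fin t × Fin (p * r) → ZMod 2))
    (hsd : IsSelfDual C)
    (hauto : ∀ v, v ∈ C ↔ cycShift v ∈ C)
    (u : Fin t × Fin (p * r) → ZMod 2) (hu : u ∈ C) (hufix : cycShift u = u)
    (v : Fin t × Fin (p * r) → ZMod 2) (hv : v ∈ C)
    (hveven : ∀ i, ∑ j, v (i, j) = 0) :
    polyInner u v = 0 ∧ polyInner v u = 0 :=
  stmt2_general p r t u hufix v hveven
end

section
/- Let C be a binary self-dual [n, n/2] code and σ an automorphism of C of odd order. Then C = F_σ(C) ⊕ E_σ(C), i.e., every codeword decomposes uniquely as a sum of a σ-fixed codeword and a codeword whose restriction to each σ-orbit has even weight. -/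
/-!
Let `T v = ∑_{k < L} v ∘ π^k`, where `L` is the order of `π`. Then `T v` is `π`-invariant, lies in
`C`, and its sum over each orbit is `L` times that of `v`, i.e. the same sum as `L` is odd; so
`c = T c + (c - T c)` is a decomposition of the required kind. A `π`-invariant vector is constant
on orbits, whose sizes divide `L` and hence are odd, so its orbit sums are its values. Therefore
`T` kills every vector with zero orbit sums and fixes every invariant vector, and any
decomposition `c = f + e` satisfies `T c = f`.
-/

open Polynomial AdjoinRoot

open Finset

theorem Odd.nsmul_eq_self_of_zmod_two {M : Type*} [AddCommGroup M] [Module (ZMod 2) M] {n : ℕ}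
    (hn : Odd n) (x : M) : n • x = x := by
  rw [← Nat.cast_smul_eq_nsmul (ZMod 2), hn.natCast_zmod_two, one_smul]

namespace Equiv.Perm

variable {α M : Type*} (π : Perm α)

section Trace

variable [AddCommMonoid M]

-- The paper's `v + σ(v) + ⋯ + σ^{L-1}(v)`, where `σ(v) = v ∘ π` and `L = orderOf π`.
noncomputable def orbitTrace (v : α → M) : α → M :=
  ∑ k ∈ range (orderOf π), v ∘ ⇑(π ^ k)

theorem orbitTrace_apply (v : α → M) (a : α) :
    π.orbitTrace v a = ∑ k ∈ range (orderOf π), v ((π ^ k) a) := by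
  simp [orbitTrace, Finset.sum_apply]

theorem orbitTrace_add (v w : α → M) :
    π.orbitTrace (v + w) = π.orbitTrace v + π.orbitTrace w := by
  simp only [orbitTrace, ← sum_add_distrib, Pi.add_comp]

theorem orbitTrace_comp (v : α → M) : π.orbitTrace v ∘ π = π.orbitTrace v := by
  funext a
  simp only [Function.comp_apply, orbitTrace_apply, ← mul_apply, ← pow_succ]
  have hL := pow_orderOf_eq_one π
  generalize orderOf π = L at hL ⊢
  cases L with
  | zero => rfl
  | succ m => rw [sum_range_succ, hL, sum_range_succ' _ m, pow_zero]

theorem orbitTrace_of_comp_eq {v : α → M} (hv : v ∘ π = v) :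
    π.orbitTrace v = orderOf π • v := by
  simp [orbitTrace, coe_pow, Function.iterate_invariant hv]

theorem comp_pow_mem {S : AddSubmonoid (α → M)} (hS : ∀ v ∈ S, v ∘ π ∈ S) {v : α → M}
    (hv : v ∈ S) (k : ℕ) : v ∘ ⇑(π ^ k) ∈ S := by
  induction k with
  | zero => simpa using hv
  | succ k ih => simpa [pow_succ, Function.comp_assoc] using hS _ ih

theorem orbitTrace_mem {S : AddSubmonoid (α → M)} (hS : ∀ v ∈ S, v ∘ π ∈ S) {v : α → M}
    (hv : v ∈ S) : π.orbitTrace v ∈ S :=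
  S.sum_mem fun k _ => π.comp_pow_mem hS hv k

end Trace

theorem apply_eq_of_comp_eq_of_sameCycle [Finite α] {v : α → M} (hv : v ∘ π = v) {a b : α}
    (h : π.SameCycle a b) : v b = v a := by
  obtain ⟨k, -, rfl⟩ := h.exists_pow_eq'
  rw [coe_pow]
  exact congrFun (Function.iterate_invariant hv k) a

section OrbitSum

variable [Fintype α] [DecidableEq α]

theorem coe_filter_sameCycle (a : α) :
    ((univ.filter (π.SameCycle a) : Finset α) : Set α) =
      MulAction.orbit (Subgroup.zpowers π) a := by
  ext b
  rw [coe_filter_univ, MulAction.mem_orbit_iff, Subgroup.exists_zpowers]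
  exact Iff.rfl

theorem card_filter_sameCycle_dvd_orderOf (a : α) :
    #(univ.filter (π.SameCycle a)) ∣ orderOf π := by
  rw [← Set.ncard_coe_finset, coe_filter_sameCycle, ← MulAction.index_stabilizer,
    ← Nat.card_zpowers]
  exact Subgroup.index_dvd_card _

section

variable [AddCommMonoid M]

theorem sum_filter_sameCycle_comp_pow (v : α → M) (a : α) (k : ℕ) :
    ∑ b ∈ univ.filter (π.SameCycle a), v ((π ^ k) b) = ∑ b ∈ univ.filter (π.SameCycle a), v b :=
  sum_equiv (π ^ k) (fun _ => by simp [sameCycle_pow_right]) fun _ _ => rfl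

theorem sum_filter_sameCycle_of_comp_eq {v : α → M} (hv : v ∘ π = v) (a : α) :
    ∑ b ∈ univ.filter (π.SameCycle a), v b = #(univ.filter (π.SameCycle a)) • v a := by
  rw [← sum_const]
  exact sum_congr rfl fun b hb =>
    π.apply_eq_of_comp_eq_of_sameCycle hv ((mem_filter_univ b).mp hb)

theorem sum_filter_sameCycle_orbitTrace (v : α → M) (a : α) :
    ∑ b ∈ univ.filter (π.SameCycle a), π.orbitTrace v b =
      orderOf π • ∑ b ∈ univ.filter (π.SameCycle a), v b := by
  simp_rw [orbitTrace_apply]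
  rw [sum_comm]
  simp [sum_filter_sameCycle_comp_pow]

end

variable [AddCommGroup M] [Module (ZMod 2) M]

theorem eq_zero_of_comp_eq_of_sum_filter_sameCycle_eq_zero (hπ : Odd (orderOf π))
    {v : α → M} (hv : v ∘ π = v) (hsum : ∀ a, ∑ b ∈ univ.filter (π.SameCycle a), v b = 0) :
    v = 0 := by
  funext a
  have hodd := hπ.of_dvd_nat (π.card_filter_sameCycle_dvd_orderOf a)
  rw [Pi.zero_apply, ← hsum a, π.sum_filter_sameCycle_of_comp_eq hv,
    hodd.nsmul_eq_self_of_zmod_two]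

theorem orbitTrace_eq_zero_of_sum_filter_sameCycle_eq_zero (hπ : Odd (orderOf π))
    {v : α → M} (hsum : ∀ a, ∑ b ∈ univ.filter (π.SameCycle a), v b = 0) :
    π.orbitTrace v = 0 :=
  π.eq_zero_of_comp_eq_of_sum_filter_sameCycle_eq_zero hπ (π.orbitTrace_comp v) fun a => by
    rw [sum_filter_sameCycle_orbitTrace, hsum, smul_zero]

theorem sum_filter_sameCycle_sub_orbitTrace (hπ : Odd (orderOf π)) (v : α → M) (a : α) :
    ∑ b ∈ univ.filter (π.SameCycle a), (v - π.orbitTrace v) b = 0 := by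
  simp only [Pi.sub_apply, sum_sub_distrib, sum_filter_sameCycle_orbitTrace,
    hπ.nsmul_eq_self_of_zmod_two, sub_self]

end OrbitSum

end Equiv.Perm

open scoped Classical in
theorem stmt16_general (n : ℕ) (C : Submodule (ZMod 2) (Fin n → ZMod 2))
    (π : Equiv.Perm (Fin n)) (hord : Odd (orderOf π))
    (hauto : ∀ v : Fin n → ZMod 2, v ∈ C ↔ (v ∘ π) ∈ C) :
    ∀ c ∈ C, ∃! fe : (Fin n → ZMod 2) × (Fin n → ZMod 2),
      fe.1 ∈ C ∧ fe.1 ∘ π = fe.1 ∧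
      fe.2 ∈ C ∧
      (∀ a : Fin n,
        ∑ b ∈ Finset.univ.filter (fun b => π.SameCycle a b), fe.2 b = 0) ∧
      c = fe.1 + fe.2 := by
  have hC : ∀ v ∈ C.toAddSubmonoid, v ∘ π ∈ C.toAddSubmonoid := fun v => (hauto v).mp
  intro c hc
  have hTc : π.orbitTrace c ∈ C := π.orbitTrace_mem hC hc
  refine ⟨(π.orbitTrace c, c - π.orbitTrace c), ⟨hTc, π.orbitTrace_comp c, C.sub_mem hc hTc,
    π.sum_filter_sameCycle_sub_orbitTrace hord c, (add_sub_cancel _ _).symm⟩, ?_⟩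
  rintro ⟨f, e⟩ ⟨-, hf, -, he, rfl⟩
  have hTf : π.orbitTrace (f + e) = f := by
    rw [π.orbitTrace_add, π.orbitTrace_of_comp_eq hf, hord.nsmul_eq_self_of_zmod_two,
      π.orbitTrace_eq_zero_of_sum_filter_sameCycle_eq_zero hord he, add_zero]
  rw [hTf, add_sub_cancel_left]

open scoped Classical in
theorem stmt16 (n : ℕ) (C : Submodule (ZMod 2) (Fin n → ZMod 2))
    (hsd : IsSelfDual C)
    (π : Equiv.Perm (Fin n)) (hord : Odd (orderOf π))
    (hauto : ∀ v : Fin n → ZMod 2, v ∈ C ↔ (v ∘ π) ∈ C) :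
    ∀ c ∈ C, ∃! fe : (Fin n → ZMod 2) × (Fin n → ZMod 2),
      fe.1 ∈ C ∧ fe.1 ∘ π = fe.1 ∧
      fe.2 ∈ C ∧
      (∀ a : Fin n,
        ∑ b ∈ Finset.univ.filter (fun b => π.SameCycle a b), fe.2 b = 0) ∧
      c = fe.1 + fe.2 :=
  stmt16_general n C π hord hauto
end
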